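/- arXiv:2508.21268 — 12 statements merged into one kernel-verified Lean document; each statement's English description precedes it below -/
import Mathlib

section
/- Let R be a commutative integral domain, t,s units of R, c₀ ∈ R, and define a*b = t·a + s·b + c₀ for a,b ∈ R. Then the identity A25, namely x*((x*y)*z) = ((x*x)*y)*z for all x,y,z ∈ R, holds if and only if s = 1 and t² = 1 (with no restriction on c₀). -/
/-! Both sides of A25 are affine in `x, y, z`, so the identity holds iff the four coefficients of
their difference vanish: `t(1 - t²)`, `ts(s - 1)`, `s(s - 1)` and `c₀(s - t)(t + 1)`. Cancelling
the units `s` and `t` leaves `s = 1` and `t² = 1`, which also kill the constant term. -/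

/-- The affine operation `a * b = t·a + s·b + c₀` on a commutative integral domain. -/
def affOp {R : Type*} [CommRing R] (t s c₀ : R) (a b : R) : R := t * a + s * b + c₀

lemma affOp_A25_sub {R : Type*} [CommRing R] (t s c₀ x y z : R) :
    affOp t s c₀ x (affOp t s c₀ (affOp t s c₀ x y) z) -
        affOp t s c₀ (affOp t s c₀ (affOp t s c₀ x x) y) z =
      t * (1 - t ^ 2) * x + t * s * (s - 1) * y + s * (s - 1) * z + c₀ * (s - t) * (t + 1) := by
  simp only [affOp]
  ring

lemma forall_affine_eq_zero_iff {R : Type*} [CommRing R] (a b c d : R) :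
    (∀ x y z : R, a * x + b * y + c * z + d = 0) ↔ a = 0 ∧ b = 0 ∧ c = 0 ∧ d = 0 := by
  constructor
  · intro h
    have hd := h 0 0 0
    have ha := h 1 0 0
    have hb := h 0 1 0
    have hc := h 0 0 1
    simp only [mul_zero, mul_one, add_zero, zero_add] at hd ha hb hc
    exact ⟨by linear_combination ha - hd, by linear_combination hb - hd,
      by linear_combination hc - hd, hd⟩
  · rintro ⟨rfl, rfl, rfl, rfl⟩ x y z
    ring

/-- An affine quasigroup over an integral domain satisfies the identity A25,
`x((xy)z) = ((xx)y)z`, iff `s = 1` and `t² = 1`. -/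
theorem affine_A25_iff {R : Type*} [CommRing R] [IsDomain R]
    (t s c₀ : R) (ht : IsUnit t) (hs : IsUnit s) :
    (∀ x y z : R,
        affOp t s c₀ x (affOp t s c₀ (affOp t s c₀ x y) z) =
          affOp t s c₀ (affOp t s c₀ (affOp t s c₀ x x) y) z) ↔
      (s = 1 ∧ t ^ 2 = 1) := by
  simp only [← sub_eq_zero (b := affOp t s c₀ (affOp t s c₀ (affOp t s c₀ _ _) _) _),
    affOp_A25_sub, forall_affine_eq_zero_iff]
  constructor
  · rintro ⟨hx, -, hz, -⟩
    have hs1 : s = 1 := sub_eq_zero.mp ((mul_eq_zero.mp hz).resolve_left hs.ne_zero)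
    have ht2 : 1 - t ^ 2 = 0 := (mul_eq_zero.mp hx).resolve_left ht.ne_zero
    exact ⟨hs1, (sub_eq_zero.mp ht2).symm⟩
  · rintro ⟨rfl, ht2⟩
    refine ⟨?_, ?_, ?_, ?_⟩
    · linear_combination -t * ht2
    · ring
    · ring
    · linear_combination -c₀ * ht2
end

section
/- Let R be a commutative integral domain, t,s units of R, c₀ ∈ R, and define a*b = t·a + s·b + c₀ for a,b ∈ R. Then the left Bol identity B14, namely x*(y*(x*z)) = (x*(y*x))*z for all x,y,z ∈ R, holds if and only if t = 1 and s² = 1 (with no restriction on c₀). -/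
/-!
Both sides of B14 are affine in `x, y, z`, and their difference has coefficients `t(1 - t)`,
`st(1 - t)`, `s(s² - 1)` and constant term `c₀(s + 1)(s - t)`. As `t` and `s` are nonzero in a
domain, all of these vanish exactly when `t = 1` and `s² = 1`.
-/

def IsLeftBol {α : Type*} (op : α → α → α) : Prop :=
  ∀ x y z, op x (op y (op x z)) = op (op x (op y x)) z

section AffineLeftBol

variable {R : Type*} [CommRing R] (t s c₀ : R)

theorem affOp_leftBol_sub (x y z : R) :
    affOp t s c₀ x (affOp t s c₀ y (affOp t s c₀ x z)) -
        affOp t s c₀ (affOp t s c₀ x (affOp t s c₀ y x)) z =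
      t * (1 - t) * x + s * t * (1 - t) * y + s * (s ^ 2 - 1) * z + c₀ * (s + 1) * (s - t) := by
  simp only [affOp]
  ring

theorem isLeftBol_affOp_one {s : R} (hs : s ^ 2 = 1) : IsLeftBol (affOp 1 s c₀) := by
  intro x y z
  rw [← sub_eq_zero, affOp_leftBol_sub]
  linear_combination (s * z + c₀) * hs

variable {t s c₀} [IsDomain R]

theorem IsLeftBol.affOp_eq_one (h : IsLeftBol (affOp t s c₀)) (ht : t ≠ 0) : t = 1 := by
  have hx : t * (1 - t) = 0 := by
    linear_combination h 1 0 0 - h 0 0 0 - affOp_leftBol_sub t s c₀ 1 0 0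
      + affOp_leftBol_sub t s c₀ 0 0 0
  exact (sub_eq_zero.mp ((mul_eq_zero.mp hx).resolve_left ht)).symm

theorem IsLeftBol.affOp_sq_eq_one (h : IsLeftBol (affOp t s c₀)) (hs : s ≠ 0) : s ^ 2 = 1 := by
  have hz : s * (s ^ 2 - 1) = 0 := by
    linear_combination h 0 0 1 - h 0 0 0 - affOp_leftBol_sub t s c₀ 0 0 1
      + affOp_leftBol_sub t s c₀ 0 0 0
  exact sub_eq_zero.mp ((mul_eq_zero.mp hz).resolve_left hs)

end AffineLeftBol

/-- An affine quasigroup over an integral domain satisfies the left Bol identity B14,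
`x(y(xz)) = (x(yx))z`, iff `t = 1` and `s² = 1`. -/
theorem affine_B14_iff {R : Type*} [CommRing R] [IsDomain R]
    (t s c₀ : R) (ht : IsUnit t) (hs : IsUnit s) :
    (∀ x y z : R,
        affOp t s c₀ x (affOp t s c₀ y (affOp t s c₀ x z)) =
          affOp t s c₀ (affOp t s c₀ x (affOp t s c₀ y x)) z) ↔
      (t = 1 ∧ s ^ 2 = 1) := by
  change IsLeftBol (affOp t s c₀) ↔ _
  constructor
  · intro h
    exact ⟨h.affOp_eq_one ht.ne_zero, h.affOp_sq_eq_one hs.ne_zero⟩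
  · rintro ⟨rfl, hs2⟩
    exact isLeftBol_affOp_one c₀ hs2
end

section
/- Let R be a commutative integral domain, t,s units of R, c₀ ∈ R, and define a*b = t·a + s·b + c₀ for a,b ∈ R. Then the identity C15, namely x*(y*(y*z)) = ((x*y)*y)*z for all x,y,z ∈ R, holds if and only if t = s and t² = 1, i.e. if and only if (t,s) = (1,1) or (t,s) = (−1,−1) (with no restriction on c₀). In particular there is a solution with neither t nor s equal to 1. -/
/-!
Both sides of C15 are affine in `x, y, z`, and their difference is
`t(1 - t²) x + st(s - t) y + s(s² - 1) z + (s² + s - t² - t) c₀`.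
Over a domain with `t, s ≠ 0` the `x`- and `y`-coefficients vanish iff `t² = 1` and `t = s`,
and then the other two vanish as well.
-/

def SatisfiesC15 {R : Type*} (op : R → R → R) : Prop :=
  ∀ x y z, op x (op y (op y z)) = op (op (op x y) y) z

section

variable {R : Type*} [CommRing R]

theorem affOp_C15_sub (t s c₀ x y z : R) :
    affOp t s c₀ x (affOp t s c₀ y (affOp t s c₀ y z)) -
        affOp t s c₀ (affOp t s c₀ (affOp t s c₀ x y) y) z =
      t * (1 - t ^ 2) * x + s * t * (s - t) * y + s * (s ^ 2 - 1) * z +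
        (s ^ 2 + s - t ^ 2 - t) * c₀ := by
  simp only [affOp]
  ring

theorem satisfiesC15_affOp_of_sq_eq_one {t : R} (c₀ : R) (ht : t ^ 2 = 1) :
    SatisfiesC15 (affOp t t c₀) := by
  intro x y z
  rw [← sub_eq_zero, affOp_C15_sub]
  linear_combination t * (z - x) * ht

theorem satisfiesC15_affOp_iff [IsDomain R] {t s : R} (c₀ : R) (ht : t ≠ 0) (hs : s ≠ 0) :
    SatisfiesC15 (affOp t s c₀) ↔ t = s ∧ t ^ 2 = 1 := by
  refine ⟨fun h => ?_, fun ⟨hts, ht2⟩ => hts ▸ satisfiesC15_affOp_of_sq_eq_one c₀ ht2⟩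
  have hd (x y z : R) := (affOp_C15_sub t s c₀ x y z).symm.trans (sub_eq_zero.2 (h x y z))
  have hx : t * (1 - t ^ 2) = 0 := by linear_combination hd 1 0 0 - hd 0 0 0
  have hy : s * t * (s - t) = 0 := by linear_combination hd 0 1 0 - hd 0 0 0
  exact ⟨(sub_eq_zero.1 ((mul_eq_zero.1 hy).resolve_left (mul_ne_zero hs ht))).symm,
    (sub_eq_zero.1 ((mul_eq_zero.1 hx).resolve_left ht)).symm⟩

theorem eq_and_sq_eq_one_iff [NoZeroDivisors R] {t s : R} :
    t = s ∧ t ^ 2 = 1 ↔ (t = 1 ∧ s = 1) ∨ (t = -1 ∧ s = -1) := by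
  constructor
  · rintro ⟨rfl, ht⟩
    simpa only [and_self] using sq_eq_one_iff.1 ht
  · rintro (⟨rfl, rfl⟩ | ⟨rfl, rfl⟩) <;> norm_num

end

/-- An affine quasigroup over an integral domain satisfies the identity C15,
`x(y(yz)) = ((xy)y)z`, iff `t = s` and `t² = 1`, i.e. iff `(t,s) = (1,1)` or
`(t,s) = (−1,−1)`. -/
theorem affine_C15_iff {R : Type*} [CommRing R] [IsDomain R]
    (t s c₀ : R) (ht : IsUnit t) (hs : IsUnit s) :
    ((∀ x y z : R,
        affOp t s c₀ x (affOp t s c₀ y (affOp t s c₀ y z)) =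
          affOp t s c₀ (affOp t s c₀ (affOp t s c₀ x y) y) z) ↔
      (t = s ∧ t ^ 2 = 1)) ∧
    ((∀ x y z : R,
        affOp t s c₀ x (affOp t s c₀ y (affOp t s c₀ y z)) =
          affOp t s c₀ (affOp t s c₀ (affOp t s c₀ x y) y) z) ↔
      ((t = 1 ∧ s = 1) ∨ (t = -1 ∧ s = -1))) := by
  have key := satisfiesC15_affOp_iff c₀ ht.ne_zero hs.ne_zero
  exact ⟨key, key.trans eq_and_sq_eq_one_iff⟩
end

section
/- Let R be a commutative integral domain, t,s units of R, c₀ ∈ R, and define a*b = t·a + s·b + c₀ for a,b ∈ R. Then the identity A15, namely x*(x*(y*z)) = ((x*x)*y)*z for all x,y,z ∈ R, holds if and only if s = 1 and (t = 1 or t = −2) (with no restriction on c₀). -/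
section CommRing

variable {R : Type*} [CommRing R]

theorem affine_eq_affine_iff {a b c d a' b' c' d' : R} :
    (∀ x y z : R, a * x + b * y + c * z + d = a' * x + b' * y + c' * z + d') ↔
      a = a' ∧ b = b' ∧ c = c' ∧ d = d' := by
  constructor
  · intro h
    have hd := h 0 0 0
    have ha := h 1 0 0
    have hb := h 0 1 0
    have hc := h 0 0 1
    simp only [mul_zero, mul_one, add_zero, zero_add] at hd ha hb hc
    exact ⟨by linear_combination ha - hd, by linear_combination hb - hd,
      by linear_combination hc - hd, hd⟩
  · rintro ⟨rfl, rfl, rfl, rfl⟩ x y z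
    rfl

variable (t s c₀ : R)

theorem affOp_nest_right (x y z : R) :
    affOp t s c₀ x (affOp t s c₀ x (affOp t s c₀ y z)) =
      (t + s * t) * x + s ^ 2 * t * y + s ^ 3 * z + (s ^ 2 + s + 1) * c₀ := by
  unfold affOp; ring

theorem affOp_nest_left (x y z : R) :
    affOp t s c₀ (affOp t s c₀ (affOp t s c₀ x x) y) z =
      t ^ 2 * (t + s) * x + t * s * y + s * z + (t ^ 2 + t + 1) * c₀ := by
  unfold affOp; ring

end CommRing

section IsDomain

variable {R : Type*} [CommRing R] [IsDomain R] {t s : R}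

theorem eq_one_of_sq_mul_eq_mul (ht : t ≠ 0) (hs : s ≠ 0) (h : s ^ 2 * t = t * s) : s = 1 := by
  have : t * s * (s - 1) = 0 := by linear_combination h
  simpa [ht, hs, sub_eq_zero] using this

theorem add_self_eq_sq_mul_add_one_iff (ht : t ≠ 0) :
    t + t = t ^ 2 * (t + 1) ↔ t = 1 ∨ t = -2 := by
  have key : t + t - t ^ 2 * (t + 1) = -(t * ((t - 1) * (t + 2))) := by ring
  rw [← sub_eq_zero, key, neg_eq_zero]
  simp [ht, sub_eq_zero, add_eq_zero_iff_eq_neg]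

end IsDomain

/-- An affine quasigroup over an integral domain satisfies the identity A15,
`x(x(yz)) = ((xx)y)z`, iff `s = 1` and (`t = 1` or `t = −2`). -/
theorem affine_A15_iff {R : Type*} [CommRing R] [IsDomain R]
    (t s c₀ : R) (ht : IsUnit t) (hs : IsUnit s) :
    (∀ x y z : R,
        affOp t s c₀ x (affOp t s c₀ x (affOp t s c₀ y z)) =
          affOp t s c₀ (affOp t s c₀ (affOp t s c₀ x x) y) z) ↔
      (s = 1 ∧ (t = 1 ∨ t = -2)) := by
  simp only [affOp_nest_right, affOp_nest_left, affine_eq_affine_iff]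
  constructor
  · rintro ⟨hx, hy, -, -⟩
    obtain rfl := eq_one_of_sq_mul_eq_mul ht.ne_zero hs.ne_zero hy
    refine ⟨rfl, (add_self_eq_sq_mul_add_one_iff ht.ne_zero).1 ?_⟩
    simpa using hx
  · rintro ⟨rfl, rfl | rfl⟩ <;> norm_num
end

section
/- Let R be a commutative integral domain, t,s units of R, c₀ ∈ R, and define a*b = t·a + s·b + c₀ for a,b ∈ R. Then the identity D24, namely x*((y*z)*x) = (x*(y*z))*x for all x,y,z ∈ R, holds if and only if either t = s (with no restriction on c₀), or t + s = 1 and c₀ = 0. -/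
theorem affOp_flexible_sub {R : Type*} [CommRing R] (t s c₀ x w : R) :
    affOp t s c₀ x (affOp t s c₀ w x) - affOp t s c₀ (affOp t s c₀ x w) x =
      (t - s) * ((1 - t - s) * x - c₀) := by
  simp only [affOp]
  ring

theorem affOp_D24_iff_forall_mul_eq_zero {R : Type*} [CommRing R] (t s c₀ : R) :
    (∀ x y z : R,
        affOp t s c₀ x (affOp t s c₀ (affOp t s c₀ y z) x) =
          affOp t s c₀ (affOp t s c₀ x (affOp t s c₀ y z)) x) ↔
      ∀ x, (t - s) * ((1 - t - s) * x - c₀) = 0 := by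
  refine ⟨fun h x => ?_, fun h x y z => ?_⟩
  · rw [← affOp_flexible_sub t s c₀ x (affOp t s c₀ 0 0), sub_eq_zero, h x 0 0]
  · rw [← sub_eq_zero, affOp_flexible_sub, h x]

theorem forall_mul_eq_zero_iff {R α : Type*} [MulZeroClass R] [NoZeroDivisors R]
    (a : R) (f : α → R) : (∀ x, a * f x = 0) ↔ a = 0 ∨ ∀ x, f x = 0 := by
  refine ⟨fun h => or_iff_not_imp_left.mpr fun ha x => (mul_eq_zero.mp (h x)).resolve_left ha, ?_⟩
  rintro (ha | hf) x
  · rw [ha, zero_mul]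
  · rw [hf x, mul_zero]

theorem forall_mul_sub_eq_zero_iff {R : Type*} [Ring R] (b c : R) :
    (∀ x, b * x - c = 0) ↔ b = 0 ∧ c = 0 := by
  refine ⟨fun h => ?_, fun ⟨hb, hc⟩ x => by rw [hb, hc, zero_mul, sub_zero]⟩
  have hc : c = 0 := by simpa using h 0
  exact ⟨by simpa [hc] using h 1, hc⟩

theorem affine_D24_iff_general {R : Type*} [CommRing R] [IsDomain R]
    (t s c₀ : R) :
    (∀ x y z : R,
        affOp t s c₀ x (affOp t s c₀ (affOp t s c₀ y z) x) =
          affOp t s c₀ (affOp t s c₀ x (affOp t s c₀ y z)) x) ↔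
      (t = s ∨ (t + s = 1 ∧ c₀ = 0)) := by
  rw [affOp_D24_iff_forall_mul_eq_zero, forall_mul_eq_zero_iff, forall_mul_sub_eq_zero_iff,
    sub_eq_zero, sub_sub, sub_eq_zero, eq_comm (a := (1 : R))]

/-- An affine quasigroup over an integral domain satisfies the identity D24,
`x((yz)x) = (x(yz))x`, iff either `t = s` (with `c₀` arbitrary), or `t + s = 1` and
`c₀ = 0` (the Alexander solution). -/
theorem affine_D24_iff {R : Type*} [CommRing R] [IsDomain R]
    (t s c₀ : R) (ht : IsUnit t) (hs : IsUnit s) :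
    (∀ x y z : R,
        affOp t s c₀ x (affOp t s c₀ (affOp t s c₀ y z) x) =
          affOp t s c₀ (affOp t s c₀ x (affOp t s c₀ y z)) x) ↔
      (t = s ∨ (t + s = 1 ∧ c₀ = 0)) :=
  affine_D24_iff_general t s c₀
end

section
/- Let (A,+) be an abelian group, t and s automorphisms of (A,+) (not assumed to commute), c₀ ∈ A, and define a*b = t(a) + s(b) + c₀ for a,b ∈ A. If * satisfies the identity D24, namely x*((y*z)*x) = (x*(y*z))*x for all x,y,z ∈ A, then t and s commute: t ∘ s = s ∘ t. -/
/-- If the affine quasigroup `a * b = t(a) + s(b) + c₀` over an abelian group `A`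
(with automorphisms `t`, `s` not assumed to commute) satisfies the identity D24,
`x((yz)x) = (x(yz))x`, then `t` and `s` commute. -/
theorem affine_D24_commute {A : Type*} [AddCommGroup A]
    (t s : A ≃+ A) (c₀ : A)
    (op : A → A → A) (hop : ∀ a b : A, op a b = t a + s b + c₀)
    (hD24 : ∀ x y z : A, op x (op (op y z) x) = op (op x (op y z)) x) :
    ∀ a : A, t (s a) = s (t a) := by
  have key : ∀ a : A, s (t a) + s c₀ = t (s a) + t c₀ := by
    intro a
    have h := hD24 0 (t.symm a) (s.symm (-c₀))
    simp only [hop, map_add, map_zero, AddEquiv.apply_symm_apply, map_neg] at h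
    abel_nf at h
    linear_combination (norm := abel) h
  intro a
  have h0 := key 0
  simp only [map_zero, zero_add] at h0
  have ha := key a
  rw [h0] at ha
  exact (add_right_cancel ha).symm
end

section
/- Let (A,+) be an abelian group, t and s automorphisms of (A,+) (not assumed to commute), c₀ ∈ A, and define a*b = t(a) + s(b) + c₀ for a,b ∈ A. If * satisfies the identity F13, namely x*(y*(z*z)) = (x*y)*(z*z) for all x,y,z ∈ A, then t and s commute: t ∘ s = s ∘ t. -/
/-! Putting `x = z = 0` in F13 gives `s (t y) + s (s c₀) = t (s y) + t c₀` for every `y`;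
the case `y = 0` says `s (s c₀) = t c₀`, and cancelling it leaves `s ∘ t = t ∘ s`. -/

section AffineOperation

variable {A F : Type*} [AddCommGroup A] [FunLike F A A] [AddMonoidHomClass F A A]

lemma affine_F13_zero_left_zero_right (t s : F) (c₀ : A) (op : A → A → A)
    (hop : ∀ a b : A, op a b = t a + s b + c₀)
    (hF13 : ∀ x y z : A, op x (op y (op z z)) = op (op x y) (op z z)) (y : A) :
    s (t y) + s (s c₀) = t (s y) + t c₀ := by
  have h := hF13 0 y 0
  simp only [hop, map_add, map_zero, zero_add] at h
  exact add_right_cancel (add_right_cancel h)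

end AffineOperation

/-- If the affine quasigroup `a * b = t(a) + s(b) + c₀` over an abelian group `A`
(with automorphisms `t`, `s` not assumed to commute) satisfies the identity F13,
`x(y(zz)) = (xy)(zz)`, then `t` and `s` commute. -/
theorem affine_F13_commute {A : Type*} [AddCommGroup A]
    (t s : A ≃+ A) (c₀ : A)
    (op : A → A → A) (hop : ∀ a b : A, op a b = t a + s b + c₀)
    (hF13 : ∀ x y z : A, op x (op y (op z z)) = op (op x y) (op z z)) :
    ∀ a : A, t (s a) = s (t a) := by
  intro a
  have key := affine_F13_zero_left_zero_right t s c₀ op hop hF13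
  have hc : s (s c₀) = t c₀ := by simpa using key 0
  have ha := key a
  rw [hc] at ha
  exact (add_right_cancel ha).symm
end

section
/- Let (X,·) be a quasigroup satisfying the right Bol identity E25: x·((y·z)·y) = ((x·y)·z)·y for all x,y,z ∈ X. Let ∂₂ : ℤ[X × X] → ℤ[X] be the group homomorphism from the free abelian group on X × X to the free abelian group on X determined by ∂₂(a,b) = a + b − a·b, and for x,y,z ∈ X set ∂₃(x,y,z) = (y,z) + (yz,y) + (x,(yz)y) − (x,y) − (xy,z) − ((xy)z,y) ∈ ℤ[X × X]. Then ∂₂(∂₃(x,y,z)) = 0 for all x,y,z ∈ X; that is, with the substitution t = s = 1 the boundary maps form a chain complex. -/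
open FreeAbelianGroup

theorem rightBol_boundary_squared_zero_general {X : Type*} [Mul X]
    (hE25 : ∀ x y z : X, x * ((y * z) * y) = ((x * y) * z) * y)
    (d2 : FreeAbelianGroup (X × X) →+ FreeAbelianGroup X)
    (hd2 : ∀ a b : X, d2 (of (a, b)) = of a + of b - of (a * b)) :
    ∀ x y z : X,
      d2 (of (y, z) + of (y * z, y) + of (x, (y * z) * y)
          - of (x, y) - of (x * y, z) - of ((x * y) * z, y)) = 0 := by
  intro x y z
  -- E25 identifies the product `x((yz)y)` with `((xy)z)y`; all remaining terms cancel in pairs.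
  simp only [map_add, map_sub, hd2, hE25]
  abel

/-- For a quasigroup satisfying the right Bol identity E25, the boundary maps
`∂₂(a,b) = a + b − ab` (substitution `t = s = 1`) and the E25 boundary `∂₃`
compose to zero: `∂₂ ∘ ∂₃ = 0`. -/
theorem rightBol_boundary_squared_zero {X : Type*} [Mul X]
    (hl : ∀ a b : X, ∃! x : X, a * x = b)
    (hr : ∀ a b : X, ∃! y : X, y * a = b)
    (hE25 : ∀ x y z : X, x * ((y * z) * y) = ((x * y) * z) * y)
    (d2 : FreeAbelianGroup (X × X) →+ FreeAbelianGroup X)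
    (hd2 : ∀ a b : X, d2 (of (a, b)) = of a + of b - of (a * b)) :
    ∀ x y z : X,
      d2 (of (y, z) + of (y * z, y) + of (x, (y * z) * y)
          - of (x, y) - of (x * y, z) - of ((x * y) * z, y)) = 0 :=
  rightBol_boundary_squared_zero_general hE25 d2 hd2
end

section
/- Let (X,·) be a quasigroup satisfying the left Bol identity B14: x·(y·(x·z)) = (x·(y·x))·z for all x,y,z ∈ X. Let ∂₂ : ℤ[X × X] → ℤ[X] be the group homomorphism from the free abelian group on X × X to the free abelian group on X determined by ∂₂(a,b) = a − b − a·b (the substitution t = 1, s = −1), and for x,y,z ∈ X set ∂₃(x,y,z) = (x,z) − (y,xz) + (x,y(xz)) + (y,x) − (x,yx) − (x(yx),z) ∈ ℤ[X × X]. Then ∂₂(∂₃(x,y,z)) = 0 for all x,y,z ∈ X. -/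
open FreeAbelianGroup

/- Expanding by `∂₂`, all terms cancel in pairs except `-x(y(xz))` and `(x(yx))z`, which
cancel by B14. -/
theorem leftBol_boundary_squared_zero_general {X : Type*} [Mul X]
    (hB14 : ∀ x y z : X, x * (y * (x * z)) = (x * (y * x)) * z)
    (d2 : FreeAbelianGroup (X × X) →+ FreeAbelianGroup X)
    (hd2 : ∀ a b : X, d2 (of (a, b)) = of a - of b - of (a * b)) :
    ∀ x y z : X,
      d2 (of (x, z) - of (y, x * z) + of (x, y * (x * z))
          + of (y, x) - of (x, y * x) - of (x * (y * x), z)) = 0 := by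
  intro x y z
  simp only [map_add, map_sub, hd2, hB14]
  abel

/-- For a quasigroup satisfying the left Bol identity B14, the boundary maps
`∂₂(a,b) = a − b − ab` (substitution `t = 1`, `s = −1`) and the B14 boundary `∂₃`
compose to zero: `∂₂ ∘ ∂₃ = 0`. -/
theorem leftBol_boundary_squared_zero {X : Type*} [Mul X]
    (hl : ∀ a b : X, ∃! x : X, a * x = b)
    (hr : ∀ a b : X, ∃! y : X, y * a = b)
    (hB14 : ∀ x y z : X, x * (y * (x * z)) = (x * (y * x)) * z)
    (d2 : FreeAbelianGroup (X × X) →+ FreeAbelianGroup X)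
    (hd2 : ∀ a b : X, d2 (of (a, b)) = of a - of b - of (a * b)) :
    ∀ x y z : X,
      d2 (of (x, z) - of (y, x * z) + of (x, y * (x * z))
          + of (y, x) - of (x, y * x) - of (x * (y * x), z)) = 0 :=
  leftBol_boundary_squared_zero_general hB14 d2 hd2
end

section
/- Let (X,·) be a quasigroup satisfying the identity D24: x·((y·z)·x) = (x·(y·z))·x for all x,y,z ∈ X, and let n be any integer. Let ∂₂ : ℤ[X × X] → ℤ[X] be the group homomorphism determined by ∂₂(a,b) = n·a + n·b − a·b (the substitution t = s = n), and for x,y,z ∈ X set ∂₃(x,y,z) = n·(yz,x) + (x,(yz)x) − n·(x,yz) − (x(yz),x) ∈ ℤ[X × X]. Then ∂₂(∂₃(x,y,z)) = 0 for all x,y,z ∈ X. -/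
open FreeAbelianGroup

theorem d2_boundary_eq_zero_of_flexible {X : Type*} [Mul X] (n : ℤ)
    (d2 : FreeAbelianGroup (X × X) →+ FreeAbelianGroup X)
    (hd2 : ∀ a b : X, d2 (of (a, b)) = n • of a + n • of b - of (a * b))
    {x w : X} (hflex : x * (w * x) = (x * w) * x) :
    d2 (n • of (w, x) + of (x, w * x) - n • of (x, w) - of (x * w, x)) = 0 := by
  simp only [map_add, map_sub, map_zsmul, hd2, hflex]
  module

theorem D24_boundary_squared_zero_general {X : Type*} [Mul X]
    (hD24 : ∀ x y z : X, x * ((y * z) * x) = (x * (y * z)) * x)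
    (n : ℤ)
    (d2 : FreeAbelianGroup (X × X) →+ FreeAbelianGroup X)
    (hd2 : ∀ a b : X, d2 (of (a, b)) = n • of a + n • of b - of (a * b)) :
    ∀ x y z : X,
      d2 (n • of (y * z, x) + of (x, (y * z) * x)
          - n • of (x, y * z) - of (x * (y * z), x)) = 0 :=
  fun x y z => d2_boundary_eq_zero_of_flexible n d2 hd2 (hD24 x y z)

/-- For a quasigroup satisfying the identity D24 and any integer `n`, the boundary maps
`∂₂(a,b) = n·a + n·b − ab` (substitution `t = s = n`) and the D24 boundary `∂₃`
compose to zero: `∂₂ ∘ ∂₃ = 0`. -/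
theorem D24_boundary_squared_zero {X : Type*} [Mul X]
    (hl : ∀ a b : X, ∃! x : X, a * x = b)
    (hr : ∀ a b : X, ∃! y : X, y * a = b)
    (hD24 : ∀ x y z : X, x * ((y * z) * x) = (x * (y * z)) * x)
    (n : ℤ)
    (d2 : FreeAbelianGroup (X × X) →+ FreeAbelianGroup X)
    (hd2 : ∀ a b : X, d2 (of (a, b)) = n • of a + n • of b - of (a * b)) :
    ∀ x y z : X,
      d2 (n • of (y * z, x) + of (x, (y * z) * x)
          - n • of (x, y * z) - of (x * (y * z), x)) = 0 :=
  D24_boundary_squared_zero_general hD24 n d2 hd2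
end

section
/- Let X = {0,1,2,3} be the quasigroup A₁ whose multiplication table has rows (indexed by the left factor 0,1,2,3) equal to (0,1,2,3), (2,0,3,1), (1,3,0,2), (3,2,1,0); that is, 0·0=0, 0·1=1, 0·2=2, 0·3=3, 1·0=2, 1·1=0, 1·2=3, 1·3=1, 2·0=1, 2·1=3, 2·2=0, 2·3=2, 3·0=3, 3·1=2, 3·2=1, 3·3=0. Then the quotient of the free abelian group ℤ[X] ≅ ℤ⁴ by the subgroup generated by the 16 elements x + y − x·y (x,y ∈ X) is isomorphic to ℤ/2ℤ; that is, H₁(A₁;1,1) ≅ ℤ/2ℤ. -/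
open FreeAbelianGroup

/-- The multiplication table of the quasigroup `A₁` from the paper. -/
def A1mul : Fin 4 → Fin 4 → Fin 4 :=
  ![![0, 1, 2, 3],
    ![2, 0, 3, 1],
    ![1, 3, 0, 2],
    ![3, 2, 1, 0]]

noncomputable section

abbrev S : Set (FreeAbelianGroup (Fin 4)) :=
  {z : FreeAbelianGroup (Fin 4) | ∃ x y : Fin 4, z = of x + of y - of (A1mul x y)}

abbrev N : AddSubgroup (FreeAbelianGroup (Fin 4)) := AddSubgroup.closure S

def f : Fin 4 → ZMod 2 := ![0, 1, 1, 0]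

def phi : FreeAbelianGroup (Fin 4) →+ ZMod 2 := FreeAbelianGroup.lift f

lemma hker : N ≤ phi.ker := by
  rw [AddSubgroup.closure_le]
  rintro z ⟨x, y, rfl⟩
  simp only [AddMonoidHom.coe_ker, Set.mem_preimage, SetLike.mem_coe, AddMonoidHom.mem_ker,
    map_sub, map_add, phi, FreeAbelianGroup.lift_apply_of]
  fin_cases x <;> fin_cases y <;> decide

def phi' : (FreeAbelianGroup (Fin 4) ⧸ N) →+ ZMod 2 :=
  QuotientAddGroup.lift N phi hker

lemma mem_S (x y : Fin 4) : (of x + of y - of (A1mul x y)) ∈ N :=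
  AddSubgroup.subset_closure ⟨x, y, rfl⟩

lemma h0 : (of (0:Fin 4) : FreeAbelianGroup (Fin 4)) ∈ N := by
  have := mem_S 0 0; simpa [A1mul] using this

lemma h11 : (of (1:Fin 4) + of 1 : FreeAbelianGroup (Fin 4)) ∈ N := by
  have h := mem_S 1 1
  have : of (1:Fin 4) + of 1 = (of 1 + of 1 - of (A1mul 1 1)) + of 0 := by
    simp [A1mul]
  rw [this]; exact N.add_mem h h0

lemma h12 : (of (1:Fin 4) - of 2 : FreeAbelianGroup (Fin 4)) ∈ N := by
  have h := mem_S 1 0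
  have : of (1:Fin 4) - of 2 = (of 1 + of 0 - of (A1mul 1 0)) - of 0 := by
    simp [A1mul]; abel
  rw [this]; exact N.sub_mem h h0

lemma h3 : (of (3:Fin 4) : FreeAbelianGroup (Fin 4)) ∈ N := by
  have h1 := mem_S 1 2
  have h2 := mem_S 1 0
  have : of (3:Fin 4) = (of 1 + of 1) + of 0
      - (of 1 + of 0 - of (A1mul 1 0)) - (of 1 + of 2 - of (A1mul 1 2)) := by
    simp [A1mul]; abel
  rw [this]
  exact N.sub_mem (N.sub_mem (N.add_mem h11 h0) h2) h1

def g : FreeAbelianGroup (Fin 4) ⧸ N := QuotientAddGroup.mk (of 1)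

lemma two_g : (2 : ℤ) • g = 0 := by
  have : (2 : ℤ) • g = QuotientAddGroup.mk (of (1:Fin 4) + of 1) := by
    show (2 : ℤ) • QuotientAddGroup.mk (of (1 : Fin 4)) = _
    rw [← QuotientAddGroup.mk_zsmul, two_zsmul]
  rw [this, QuotientAddGroup.eq_zero_iff]
  exact h11

def psi : ZMod 2 →+ (FreeAbelianGroup (Fin 4) ⧸ N) :=
  ZMod.lift 2 ⟨zmultiplesHom _ g, by simpa using two_g⟩

lemma comp1 : phi'.comp psi = AddMonoidHom.id _ := by
  ext1 x
  fin_cases x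
  · show phi' (psi 0) = 0
    simp
  · show phi' (psi 1) = 1
    have : psi 1 = g := by
      have := ZMod.lift_coe (n:=2) ⟨zmultiplesHom _ g, by simpa using two_g⟩ (1:ℤ)
      simpa [psi] using this
    rw [this]
    show phi (of 1) = 1
    simp [phi, f]

lemma comp2 : psi.comp phi' = AddMonoidHom.id _ := by
  have key : ∀ x : Fin 4, psi (phi (of x)) = QuotientAddGroup.mk (of x) := by
    intro x
    have e1 : psi 1 = g := by
      have := ZMod.lift_coe (n:=2) ⟨zmultiplesHom _ g, by simpa using two_g⟩ (1:ℤ)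
      simpa [psi] using this
    have e0 : psi 0 = 0 := map_zero psi
    fin_cases x
    · show psi (phi (of 0)) = _
      rw [show phi (of (0:Fin 4)) = 0 by simp [phi, f], e0]
      exact ((QuotientAddGroup.eq_zero_iff _).2 h0).symm
    · show psi (phi (of 1)) = _
      rw [show phi (of (1:Fin 4)) = 1 by simp [phi, f], e1]; rfl
    · show psi (phi (of 2)) = _
      rw [show phi (of (2:Fin 4)) = 1 by simp [phi, f], e1]
      show QuotientAddGroup.mk (of (1:Fin 4)) = QuotientAddGroup.mk (of 2)
      rw [QuotientAddGroup.eq]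
      have : -of (1:Fin 4) + of 2 = -(of 1 - of 2) := by abel
      rw [this]; exact N.neg_mem h12
    · show psi (phi (of 3)) = _
      rw [show phi (of (3:Fin 4)) = 0 by simp [phi, f], e0]
      exact ((QuotientAddGroup.eq_zero_iff _).2 h3).symm
  refine AddMonoidHom.ext fun q => ?_
  induction q using QuotientAddGroup.induction_on with
  | H z =>
    show psi (phi z) = QuotientAddGroup.mk z
    induction z using FreeAbelianGroup.induction_on with
    | zero => simp
    | of x => exact key x
    | neg x ih =>
      rw [map_neg, map_neg, ih]; rfl
    | add a b iha ihb =>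
      rw [map_add, map_add, iha, ihb]; rfl

end

/-- `H₁(A₁;1,1) ≅ ℤ/2ℤ`: the quotient of the free abelian group on `A₁` by the subgroup
generated by the elements `x + y − x·y` is isomorphic to `ℤ/2ℤ`. -/
theorem H1_A1_one_one :
    Nonempty
      ((FreeAbelianGroup (Fin 4) ⧸
          AddSubgroup.closure
            {z : FreeAbelianGroup (Fin 4) | ∃ x y : Fin 4, z = of x + of y - of (A1mul x y)})
        ≃+ ZMod 2) := by
  exact ⟨AddMonoidHom.toAddEquiv phi' psi comp2 comp1⟩
end

section
/- Let X = {0,1,2,3,4} be the quasigroup A₄ whose multiplication table has rows (indexed by the left factor 0,1,2,3,4) equal to (0,1,2,3,4), (2,3,1,4,0), (3,0,4,2,1), (4,2,0,1,3), (1,4,3,0,2). Then the quotient of the free abelian group ℤ[X] ≅ ℤ⁵ by the subgroup generated by the 25 elements −2·x + y − x·y (x,y ∈ X) is isomorphic to ℤ/10ℤ; that is, H₁(A₄;−2,1) ≅ ℤ/10ℤ. -/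
open FreeAbelianGroup

/-- The multiplication table of the quasigroup `A₄` from the paper. -/
def A4mul : Fin 5 → Fin 5 → Fin 5 :=
  ![![0, 1, 2, 3, 4],
    ![2, 3, 1, 4, 0],
    ![3, 0, 4, 2, 1],
    ![4, 2, 0, 1, 3],
    ![1, 4, 3, 0, 2]]

/-- `H₁(A₄;−2,1) ≅ ℤ/10ℤ`: the quotient of the free abelian group on `A₄` by the subgroup
generated by the elements `−2·x + y − x·y` is isomorphic to `ℤ/10ℤ`. -/
theorem H1_A4_negTwo_one :
    Nonempty
      ((FreeAbelianGroup (Fin 5) ⧸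
          AddSubgroup.closure
            {z : FreeAbelianGroup (Fin 5) |
              ∃ x y : Fin 5, z = (-2 : ℤ) • of x + of y - of (A4mul x y)})
        ≃+ ZMod 10) := by
  set N : AddSubgroup (FreeAbelianGroup (Fin 5)) :=
    AddSubgroup.closure
      {z : FreeAbelianGroup (Fin 5) |
        ∃ x y : Fin 5, z = (-2 : ℤ) • of x + of y - of (A4mul x y)} with hN
  set π : FreeAbelianGroup (Fin 5) →+ FreeAbelianGroup (Fin 5) ⧸ N :=
    QuotientAddGroup.mk' N with hπ
  -- the defining relations in the quotient
  have h : ∀ x y : Fin 5, π (of (A4mul x y)) = (-2 : ℤ) • π (of x) + π (of y) := by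
    intro x y
    have hz : ((-2 : ℤ) • of x + of y - of (A4mul x y)) ∈ N :=
      AddSubgroup.subset_closure ⟨x, y, rfl⟩
    have h0 : (-2 : ℤ) • π (of x) + π (of y) - π (of (A4mul x y)) = 0 := by
      rw [← map_zsmul, ← map_add, ← map_sub]
      exact (QuotientAddGroup.eq_zero_iff _).mpr hz
    exact (sub_eq_zero.mp h0).symm
  set a : FreeAbelianGroup (Fin 5) ⧸ N := π (of 1) with ha
  have e3 : π (of 3) = (-1 : ℤ) • a := by
    have := h 1 1
    rw [show A4mul 1 1 = 3 by decide] at this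
    rw [this, ← ha]; abel
  have e4 : π (of 4) = (-3 : ℤ) • a := by
    have := h 1 3
    rw [show A4mul 1 3 = 4 by decide] at this
    rw [this, e3, ← ha]; abel
  have e0 : π (of 0) = (-5 : ℤ) • a := by
    have := h 1 4
    rw [show A4mul 1 4 = 0 by decide] at this
    rw [this, e4, ← ha]; abel
  have e2 : π (of 2) = (-7 : ℤ) • a := by
    have := h 1 0
    rw [show A4mul 1 0 = 2 by decide] at this
    rw [this, e0, ← ha]; abel
  have hten : (10 : ℤ) • a = 0 := by
    have h12 := h 1 2
    rw [show A4mul 1 2 = 1 by decide, e2, ← ha] at h12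
    calc (10 : ℤ) • a = a - ((-2 : ℤ) • a + (-7 : ℤ) • a) := by abel
      _ = 0 := sub_eq_zero.mpr h12
  -- the map to ZMod 10
  set f : Fin 5 → ZMod 10 := fun x => ((![5, 1, 3, 9, 7] x : ℤ) : ZMod 10) with hf
  set φ : FreeAbelianGroup (Fin 5) →+ ZMod 10 := FreeAbelianGroup.lift f with hφ
  have hz : ∀ x y : Fin 5, (-2 : ℤ) • f x + f y - f (A4mul x y) = 0 := by decide
  have hker : N ≤ φ.ker := by
    rw [hN]
    refine (AddSubgroup.closure_le _).mpr ?_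
    rintro z ⟨x, y, rfl⟩
    have hval : φ ((-2 : ℤ) • of x + of y - of (A4mul x y))
        = (-2 : ℤ) • f x + f y - f (A4mul x y) := by
      rw [map_sub, map_add, map_zsmul, hφ, FreeAbelianGroup.lift_apply_of,
        FreeAbelianGroup.lift_apply_of, FreeAbelianGroup.lift_apply_of]
    show φ _ = 0
    rw [hval]; exact hz x y
  set φbar : (FreeAbelianGroup (Fin 5) ⧸ N) →+ ZMod 10 :=
    QuotientAddGroup.lift N φ hker with hφbar
  have h10' : (zmultiplesHom _ a) ((10 : ℕ) : ℤ) = 0 := by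
    simpa using hten
  set ψ : ZMod 10 →+ (FreeAbelianGroup (Fin 5) ⧸ N) :=
    ZMod.lift 10 ⟨zmultiplesHom _ a, h10'⟩ with hψ
  have hψint : ∀ k : ℤ, ψ ((k : ℤ) : ZMod 10) = k • a := by
    intro k
    rw [hψ, ZMod.lift_coe]
    rfl
  have hφof : ∀ x : Fin 5, φbar (π (of x)) = f x := by
    intro x
    exact (QuotientAddGroup.lift_mk' N hker (of x)).trans (FreeAbelianGroup.lift_apply_of f x)
  have key : ∀ x : Fin 5, ψ (φbar (π (of x))) = π (of x) := by
    intro x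
    rw [hφof]
    fin_cases x
    · show ψ (((5 : ℤ) : ZMod 10)) = π (of 0)
      rw [hψint, e0, show (5 : ℤ) • a = (-5 : ℤ) • a + (10 : ℤ) • a by abel, hten, add_zero]
    · show ψ (((1 : ℤ) : ZMod 10)) = π (of 1)
      rw [hψint, ← ha, one_zsmul]
    · show ψ (((3 : ℤ) : ZMod 10)) = π (of 2)
      rw [hψint, e2, show (3 : ℤ) • a = (-7 : ℤ) • a + (10 : ℤ) • a by abel, hten, add_zero]
    · show ψ (((9 : ℤ) : ZMod 10)) = π (of 3)
      rw [hψint, e3, show (9 : ℤ) • a = (-1 : ℤ) • a + (10 : ℤ) • a by abel, hten, add_zero]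
    · show ψ (((7 : ℤ) : ZMod 10)) = π (of 4)
      rw [hψint, e4, show (7 : ℤ) • a = (-3 : ℤ) • a + (10 : ℤ) • a by abel, hten, add_zero]
  have comp1 : ψ.comp φbar = AddMonoidHom.id _ := by
    apply QuotientAddGroup.addMonoidHom_ext
    apply FreeAbelianGroup.lift.symm.injective
    funext x
    exact key x
  have comp2 : φbar.comp ψ = AddMonoidHom.id _ := by
    ext z
    obtain ⟨k, rfl⟩ := ZMod.intCast_surjective z
    show φbar (ψ ((k : ℤ) : ZMod 10)) = ((k : ℤ) : ZMod 10)
    rw [hψint, map_zsmul, ha, hφof]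
    show k • ((1 : ℤ) : ZMod 10) = _
    simp
  exact ⟨AddMonoidHom.toAddEquiv φbar ψ comp1 comp2⟩
end
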